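/- Let M > 0, let p ∈ ℝ^d satisfy ‖p‖ ≤ M, and let u ∈ ℝ^d be nonzero. Define I(p) = (p, √(M² − ‖p‖²)) ∈ ℝ^{d+1} and U(u) = ((M/‖u‖)·u, 0) ∈ ℝ^{d+1}. Then the squared Euclidean distance of the transformed vectors satisfies ‖I(p) − U(u)‖² = 2M · (M − ⟨p, u⟩/‖u‖), and moreover M − ⟨p, u⟩/‖u‖ ≥ 0. -/

import Mathlib

open RealInnerProductSpace

/-- The QNF item transformation of H2-ALSH: `I(p) = (p, √(M² - ‖p‖²)) ∈ ℝ^{d+1}`. -/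
noncomputable def qnfItem {d : ℕ} (M : ℝ) (p : EuclideanSpace ℝ (Fin d)) :
    EuclideanSpace ℝ (Fin (d + 1)) :=
  (EuclideanSpace.equiv (Fin (d + 1)) ℝ).symm
    (Fin.snoc (fun j => p j) (Real.sqrt (M ^ 2 - ‖p‖ ^ 2)))

/-- The QNF user transformation of H2-ALSH: `U(u) = ((M/‖u‖) • u, 0) ∈ ℝ^{d+1}`. -/
noncomputable def qnfUser {d : ℕ} (M : ℝ) (u : EuclideanSpace ℝ (Fin d)) :
    EuclideanSpace ℝ (Fin (d + 1)) :=
  (EuclideanSpace.equiv (Fin (d + 1)) ℝ).symm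
    (Fin.snoc (fun j => (M / ‖u‖) * u j) 0)

/-- For the QNF transformation, `‖I(p) - U(u)‖² = 2M · (M - ⟪p, u⟫/‖u‖)` and
`M - ⟪p, u⟫/‖u‖ ≥ 0`. -/
theorem qnf_dist_sq {d : ℕ} (M : ℝ) (hM : 0 < M)
    (p u : EuclideanSpace ℝ (Fin d)) (hp : ‖p‖ ≤ M) (hu : u ≠ 0) :
    ‖qnfItem M p - qnfUser M u‖ ^ 2 = 2 * M * (M - ⟪p, u⟫ / ‖u‖) ∧
      0 ≤ M - ⟪p, u⟫ / ‖u‖ := by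
  have hu0 : (0:ℝ) < ‖u‖ := norm_pos_iff.mpr hu
  have hscal : ⟪p, u⟫ ≤ M * ‖u‖ :=
    le_trans (real_inner_le_norm p u) (by nlinarith [norm_nonneg u])
  have h2 : 0 ≤ M - ⟪p, u⟫ / ‖u‖ := by
    rw [sub_nonneg, div_le_iff₀ hu0]; exact hscal
  refine ⟨?_, h2⟩
  have hM2 : 0 ≤ M ^ 2 - ‖p‖ ^ 2 := by nlinarith [norm_nonneg p]
  set c : ℝ := M / ‖u‖ with hc
  have key : ∑ j : Fin d, (p j - c * u j) ^ 2 = ‖p - c • u‖ ^ 2 := by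
    rw [← real_inner_self_eq_norm_sq]
    rw [PiLp.inner_apply]
    simp [sub_sq, RCLike.inner_apply, mul_comm]
  have hexp : ‖p - c • u‖ ^ 2 = ‖p‖ ^ 2 - 2 * c * ⟪p, u⟫ + c ^ 2 * ‖u‖ ^ 2 := by
    rw [norm_sub_sq_real, norm_smul, real_inner_smul_right]
    simp [mul_pow]
    ring
  have hdist : ‖qnfItem M p - qnfUser M u‖ ^ 2 =
      (∑ j : Fin d, (p j - c * u j) ^ 2) + (M ^ 2 - ‖p‖ ^ 2) := by
    rw [← real_inner_self_eq_norm_sq, PiLp.inner_apply]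
    rw [Fin.sum_univ_castSucc]
    simp only [qnfItem, qnfUser, RCLike.inner_apply, conj_trivial]
    simp only [EuclideanSpace.equiv, PiLp.sub_apply]
    simp [Fin.snoc_castSucc, Fin.snoc_last, Real.sq_sqrt hM2, sq]
    rw [Real.mul_self_sqrt (by nlinarith : (0:ℝ) ≤ M * M - ‖p‖ * ‖p‖)]
  rw [hdist, key, hexp]
  have hcu : c * ‖u‖ = M := div_mul_cancel₀ M (ne_of_gt hu0)
  have : c ^ 2 * ‖u‖ ^ 2 = M ^ 2 := by nlinarith
  rw [this]
  have hcI : c * ⟪p, u⟫ = M * (⟪p, u⟫ / ‖u‖) := by rw [hc]; ring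
  linarith
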